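/- (Uniform-in-model linear representation for least squares) Let (X₁, Y₁), …, (X_n, Y_n) be points of ℝ^p × ℝ (e.g., a realized sample), define Σ̂_n := (1/n) Σᵢ XᵢXᵢᵀ, Γ̂_n := (1/n) Σᵢ XᵢYᵢ, and let Σ_n ∈ ℝ^{p×p} symmetric and Γ_n ∈ ℝ^p be given (in the stochastic setting, Σ_n = (1/n) Σᵢ E[XᵢXᵢᵀ] and Γ_n = (1/n) Σᵢ E[XᵢYᵢ]). Suppose Λ_n(k) := Λ(k; Σ_n) > 0 and RIP_n(k) := RIP(k, Σ̂_n − Σ_n) < Λ_n(k). Then sup_{M∈𝓜(k)} ‖β̂_{n,M} − β_{n,M} − (1/n) Σ_{i=1}^n [Σ_n(M)]^{-1} Xᵢ(M)(Yᵢ − Xᵢ(M)ᵀ β_{n,M})‖₂ ≤ (RIP_n(k)/Λ_n(k)) · (𝒟_n(k) + RIP_n(k) · S_{2,k}(Σ_n, Γ_n)) / (Λ_n(k) − RIP_n(k)), where 𝒟_n(k) := 𝒟(k, Γ̂_n − Γ_n), β̂_{n,M} := (Σ̂_n(M))^{-1} Γ̂_n(M), and β_{n,M} := (Σ_n(M))^{-1}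 Γ_n(M). -/

import Mathlib

/-!
Fix a model `M` and write `A = Σ_n(M)`, `Â = Σ̂_n(M)`, `Δ = Â - A`, `β = A⁻¹ Γ_n(M)` and
`β̂ = Â⁻¹ Γ̂_n(M)`. Extending vectors on `M` by zero shows that the quadratic form of `A` is
bounded below by `Λ_n(k) ‖θ‖₂²`; since `‖Δ‖_op ≤ RIP_n(k)`, that of `Â` is bounded below by
`(Λ_n(k) - RIP_n(k)) ‖θ‖₂²`, so `‖A⁻¹‖_op ≤ Λ_n(k)⁻¹` and `‖Â⁻¹‖_op ≤ (Λ_n(k) - RIP_n(k))⁻¹`.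
The averaged score `(1/n) ∑ᵢ Xᵢ(M) (Yᵢ - Xᵢ(M)ᵀ β)` is `Γ̂_n(M) - Â β`, and two exact identities
finish the proof:
`β̂ - β - A⁻¹ (Γ̂_n(M) - Â β) = A⁻¹ Δ (β - β̂)` and `β̂ - β = Â⁻¹ (Γ̂_n(M) - Γ_n(M) - Δ β)`.
-/

open scoped BigOperators
open MeasureTheory ProbabilityTheory Real Matrix

noncomputable section

/-- The Euclidean (`ℓ₂`) norm of a finitely indexed real vector. -/
def norm2 {ι : Type*} [Fintype ι] (v : ι → ℝ) : ℝ := Real.sqrt (∑ i, (v i) ^ 2)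

/-- The `ℓ₁` norm of a finitely indexed real vector. -/
def norm1 {ι : Type*} [Fintype ι] (v : ι → ℝ) : ℝ := ∑ i, |v i|

/-- The `ℓ₂ → ℓ₂` operator norm of a square real matrix. -/
def opNorm {ι : Type*} [Fintype ι] (A : Matrix ι ι ℝ) : ℝ :=
  sSup {r | ∃ x : ι → ℝ, norm2 x ≤ 1 ∧ r = norm2 (A.mulVec x)}

/-- The collection of models: nonempty subsets of `{1, …, p}` of cardinality at most `k`. -/
def Models (p k : ℕ) : Set (Finset (Fin p)) := {M | 1 ≤ M.card ∧ M.card ≤ k}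

/-- The subvector of `v` with indices in the model `M`. -/
def subv {p : ℕ} (v : Fin p → ℝ) (M : Finset (Fin p)) : {x // x ∈ M} → ℝ := fun i => v i.1

/-- The submatrix of `A` with row and column indices in the model `M`. -/
def subm {p : ℕ} (A : Matrix (Fin p) (Fin p) ℝ) (M : Finset (Fin p)) :
    Matrix {x // x ∈ M} {x // x ∈ M} ℝ := fun i j => A i.1 j.1

/-- `RIP(k, A)`: the maximal `k`-sparse operator norm `sup_{M ∈ 𝓜(k)} ‖A(M)‖_op`. -/
def RIP {p : ℕ} (k : ℕ) (A : Matrix (Fin p) (Fin p) ℝ) : ℝ :=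
  ⨆ M : Models p k, opNorm (subm A M.1)

/-- `𝒟(k, v) = sup_{M ∈ 𝓜(k)} ‖v(M)‖₂`. -/
def Dnorm {p : ℕ} (k : ℕ) (v : Fin p → ℝ) : ℝ :=
  ⨆ M : Models p k, norm2 (subv v M.1)

/-- `θ` has at most `k` nonzero coordinates. -/
def sparse {p : ℕ} (k : ℕ) (θ : Fin p → ℝ) : Prop := Set.ncard {j | θ j ≠ 0} ≤ k

/-- The minimal `k`-sparse eigenvalue
`Λ(k; A) = inf{θᵀAθ/‖θ‖₂² : θ ≠ 0, θ k-sparse}`. -/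
def Lam {p : ℕ} (k : ℕ) (A : Matrix (Fin p) (Fin p) ℝ) : ℝ :=
  sInf {r | ∃ θ : Fin p → ℝ, θ ≠ 0 ∧ sparse k θ ∧ r = θ ⬝ᵥ A.mulVec θ / norm2 θ ^ 2}

/-- The linear regression map `β_M(Σ, Γ) = (Σ(M))⁻¹ Γ(M)`. -/
def betaM {p : ℕ} (M : Finset (Fin p)) (S : Matrix (Fin p) (Fin p) ℝ) (G : Fin p → ℝ) :
    {x // x ∈ M} → ℝ := (subm S M)⁻¹.mulVec (subv G M)

/-- `S_{2,k}(Σ, Γ) = sup_{M ∈ 𝓜(k)} ‖β_M(Σ, Γ)‖₂`. -/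
def S2k {p : ℕ} (k : ℕ) (S : Matrix (Fin p) (Fin p) ℝ) (G : Fin p → ℝ) : ℝ :=
  ⨆ M : Models p k, norm2 (betaM M.1 S G)

/-- `S_{1,k}(Σ, Γ) = sup_{M ∈ 𝓜(k)} ‖β_M(Σ, Γ)‖₁`. -/
def S1k {p : ℕ} (k : ℕ) (S : Matrix (Fin p) (Fin p) ℝ) (G : Fin p → ℝ) : ℝ :=
  ⨆ M : Models p k, norm1 (betaM M.1 S G)

/-- The `k`-sparse Euclidean unit ball `Θ_k ⊆ ℝ^p`. -/
def Theta (p k : ℕ) : Set (Fin p → ℝ) := {θ | sparse k θ ∧ norm2 θ ≤ 1}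

/-- The elementwise maximum norm `|||A|||_∞` of a matrix. -/
def normInfMat {p : ℕ} (A : Matrix (Fin p) (Fin p) ℝ) : ℝ :=
  ⨆ q : Fin p × Fin p, |A q.1 q.2|

/-- The supremum norm `‖v‖_∞` of a vector. -/
def normInfVec {p : ℕ} (v : Fin p → ℝ) : ℝ := ⨆ j, |v j|

section Norm2

variable {ι : Type*} [Fintype ι]

theorem norm2_eq_norm (v : ι → ℝ) : norm2 v = ‖WithLp.toLp 2 v‖ := by
  simp [norm2, EuclideanSpace.norm_eq]

theorem norm2_nonneg (v : ι → ℝ) : 0 ≤ norm2 v := Real.sqrt_nonneg _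

theorem norm2_eq_zero {v : ι → ℝ} : norm2 v = 0 ↔ v = 0 := by
  simp [norm2_eq_norm]

theorem norm2_pos {v : ι → ℝ} (hv : v ≠ 0) : 0 < norm2 v :=
  (norm2_nonneg v).lt_of_ne (Ne.symm (mt norm2_eq_zero.1 hv))

theorem norm2_sub_le (a b : ι → ℝ) : norm2 (a - b) ≤ norm2 a + norm2 b := by
  simpa only [norm2_eq_norm, WithLp.toLp_sub] using norm_sub_le (WithLp.toLp 2 a) (WithLp.toLp 2 b)

theorem norm2_sub_comm (a b : ι → ℝ) : norm2 (a - b) = norm2 (b - a) := by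
  simpa only [norm2_eq_norm, WithLp.toLp_sub] using norm_sub_rev (WithLp.toLp 2 a) (WithLp.toLp 2 b)

theorem abs_dotProduct_le_norm2_mul_norm2 (x y : ι → ℝ) : |x ⬝ᵥ y| ≤ norm2 x * norm2 y := by
  simpa [norm2_eq_norm, PiLp.inner_apply, dotProduct, mul_comm] using
    abs_real_inner_le_norm (WithLp.toLp 2 x : EuclideanSpace ℝ ι) (WithLp.toLp 2 y)

variable [DecidableEq ι]

theorem opNorm_eq_norm_toEuclideanCLM (A : Matrix ι ι ℝ) :
    opNorm A = ‖toEuclideanCLM (𝕜 := ℝ) A‖ := by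
  rw [← ContinuousLinearMap.sSup_unitClosedBall_eq_norm, opNorm]
  congr 1
  ext r
  constructor
  · rintro ⟨x, hx, rfl⟩
    exact ⟨WithLp.toLp 2 x, by simpa [norm2_eq_norm] using hx, by simp [norm2_eq_norm]⟩
  · rintro ⟨x, hx, rfl⟩
    exact ⟨x.ofLp, by simpa [norm2_eq_norm] using hx, by
      rw [norm2_eq_norm, ← ofLp_toEuclideanCLM, WithLp.toLp_ofLp]⟩

theorem opNorm_nonneg (A : Matrix ι ι ℝ) : 0 ≤ opNorm A :=
  opNorm_eq_norm_toEuclideanCLM A ▸ norm_nonneg _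

theorem norm2_mulVec_le_opNorm (A : Matrix ι ι ℝ) (x : ι → ℝ) :
    norm2 (A *ᵥ x) ≤ opNorm A * norm2 x := by
  simpa [norm2_eq_norm, opNorm_eq_norm_toEuclideanCLM] using
    (toEuclideanCLM (𝕜 := ℝ) A).le_opNorm (WithLp.toLp 2 x)

theorem abs_dotProduct_mulVec_le_opNorm (A : Matrix ι ι ℝ) (θ : ι → ℝ) :
    |θ ⬝ᵥ A *ᵥ θ| ≤ opNorm A * norm2 θ ^ 2 :=
  calc |θ ⬝ᵥ A *ᵥ θ| ≤ norm2 θ * norm2 (A *ᵥ θ) := abs_dotProduct_le_norm2_mul_norm2 _ _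
    _ ≤ norm2 θ * (opNorm A * norm2 θ) := by
      gcongr
      · exact norm2_nonneg θ
      · exact norm2_mulVec_le_opNorm A θ
    _ = opNorm A * norm2 θ ^ 2 := by ring

end Norm2

section Perturbation

variable {ι R : Type*} [Fintype ι] [DecidableEq ι] [CommRing R]

theorem nonsing_inv_mulVec_mulVec {A : Matrix ι ι R} (hA : IsUnit A) (v : ι → R) :
    A⁻¹ *ᵥ (A *ᵥ v) = v := by
  rw [mulVec_mulVec, nonsing_inv_mul A ((isUnit_iff_isUnit_det A).1 hA), one_mulVec]

theorem mulVec_nonsing_inv_mulVec {A : Matrix ι ι R} (hA : IsUnit A) (v : ι → R) :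
    A *ᵥ (A⁻¹ *ᵥ v) = v := by
  rw [mulVec_mulVec, mul_nonsing_inv A ((isUnit_iff_isUnit_det A).1 hA), one_mulVec]

theorem inv_mulVec_sub_inv_mulVec {A A' : Matrix ι ι R} (hA : IsUnit A) (hA' : IsUnit A')
    (g g' : ι → R) :
    A'⁻¹ *ᵥ g' - A⁻¹ *ᵥ g = A'⁻¹ *ᵥ (g' - g - (A' - A) *ᵥ (A⁻¹ *ᵥ g)) := by
  simp only [sub_mulVec, mulVec_sub, nonsing_inv_mulVec_mulVec hA',
    mulVec_nonsing_inv_mulVec hA]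
  abel

theorem inv_mulVec_sub_inv_mulVec_sub_linearization {A A' : Matrix ι ι R} (hA : IsUnit A)
    (hA' : IsUnit A') (g g' : ι → R) :
    A'⁻¹ *ᵥ g' - A⁻¹ *ᵥ g - A⁻¹ *ᵥ (g' - A' *ᵥ (A⁻¹ *ᵥ g)) =
      A⁻¹ *ᵥ ((A' - A) *ᵥ (A⁻¹ *ᵥ g - A'⁻¹ *ᵥ g')) := by
  simp only [sub_mulVec, mulVec_sub, nonsing_inv_mulVec_mulVec hA,
    mulVec_nonsing_inv_mulVec hA']
  abel

end Perturbation

section Coercive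

variable {ι : Type*} [Fintype ι]

def IsCoerciveWith (c : ℝ) (B : Matrix ι ι ℝ) : Prop :=
  ∀ θ : ι → ℝ, c * norm2 θ ^ 2 ≤ θ ⬝ᵥ B *ᵥ θ

namespace IsCoerciveWith

variable {c r : ℝ} {B B' : Matrix ι ι ℝ}

theorem mul_norm2_le_norm2_mulVec (h : IsCoerciveWith c B) (θ : ι → ℝ) :
    c * norm2 θ ≤ norm2 (B *ᵥ θ) := by
  rcases (norm2_nonneg θ).eq_or_lt with hθ | hθ
  · rw [← hθ, mul_zero]
    exact norm2_nonneg _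
  · have : c * norm2 θ ^ 2 ≤ norm2 θ * norm2 (B *ᵥ θ) :=
      (h θ).trans ((le_abs_self _).trans (abs_dotProduct_le_norm2_mul_norm2 _ _))
    nlinarith

variable [DecidableEq ι]

theorem isUnit (h : IsCoerciveWith c B) (hc : 0 < c) : IsUnit B := by
  rw [← mulVec_injective_iff_isUnit]
  intro x y hxy
  have := h.mul_norm2_le_norm2_mulVec (x - y)
  rw [mulVec_sub, hxy, sub_self, norm2_eq_zero.2 rfl] at this
  have hxy0 : norm2 (x - y) = 0 :=
    le_antisymm (nonpos_of_mul_nonpos_right this hc) (norm2_nonneg _)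
  exact sub_eq_zero.1 (norm2_eq_zero.1 hxy0)

theorem norm2_inv_mulVec_le (h : IsCoerciveWith c B) (hc : 0 < c) (v : ι → ℝ) :
    norm2 (B⁻¹ *ᵥ v) ≤ c⁻¹ * norm2 v := by
  rw [le_inv_mul_iff₀ hc]
  simpa only [mulVec_nonsing_inv_mulVec (h.isUnit hc)] using h.mul_norm2_le_norm2_mulVec (B⁻¹ *ᵥ v)

theorem of_opNorm_sub_le (h : IsCoerciveWith c B) (hB' : opNorm (B' - B) ≤ r) :
    IsCoerciveWith (c - r) B' := by
  intro θ
  have hsplit : θ ⬝ᵥ B' *ᵥ θ = θ ⬝ᵥ B *ᵥ θ + θ ⬝ᵥ (B' - B) *ᵥ θ := by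
    rw [sub_mulVec, dotProduct_sub]
    ring
  have hpert : -(r * norm2 θ ^ 2) ≤ θ ⬝ᵥ (B' - B) *ᵥ θ :=
    calc -(r * norm2 θ ^ 2) ≤ -(opNorm (B' - B) * norm2 θ ^ 2) := by gcongr
      _ ≤ θ ⬝ᵥ (B' - B) *ᵥ θ := neg_le_of_abs_le (abs_dotProduct_mulVec_le_opNorm _ θ)
  linarith [h θ]

end IsCoerciveWith

end Coercive

theorem norm2_inv_mulVec_sub_linearization_le {ι : Type*} [Fintype ι] [DecidableEq ι]
    {A A' : Matrix ι ι ℝ} {g g' : ι → ℝ} {Λ r : ℝ} (hΛ : 0 < Λ) (hA : IsCoerciveWith Λ A)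
    (hAA' : opNorm (A' - A) ≤ r) (hrΛ : r < Λ) :
    norm2 (A'⁻¹ *ᵥ g' - A⁻¹ *ᵥ g - A⁻¹ *ᵥ (g' - A' *ᵥ (A⁻¹ *ᵥ g))) ≤
      r / Λ * ((norm2 (g' - g) + r * norm2 (A⁻¹ *ᵥ g)) / (Λ - r)) := by
  have hΛr : 0 < Λ - r := sub_pos.2 hrΛ
  have hA' : IsCoerciveWith (Λ - r) A' := hA.of_opNorm_sub_le hAA'
  have hr : 0 ≤ r := (opNorm_nonneg _).trans hAA'
  have hΔ (v : ι → ℝ) : norm2 ((A' - A) *ᵥ v) ≤ r * norm2 v :=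
    (norm2_mulVec_le_opNorm _ v).trans (mul_le_mul_of_nonneg_right hAA' (norm2_nonneg v))
  have hdiff : norm2 (A'⁻¹ *ᵥ g' - A⁻¹ *ᵥ g) ≤
      (Λ - r)⁻¹ * (norm2 (g' - g) + r * norm2 (A⁻¹ *ᵥ g)) := by
    rw [inv_mulVec_sub_inv_mulVec (hA.isUnit hΛ) (hA'.isUnit hΛr)]
    refine (hA'.norm2_inv_mulVec_le hΛr _).trans ?_
    gcongr
    calc _ ≤ norm2 (g' - g) + norm2 ((A' - A) *ᵥ (A⁻¹ *ᵥ g)) := norm2_sub_le _ _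
      _ ≤ _ := by grw [hΔ]
  rw [inv_mulVec_sub_inv_mulVec_sub_linearization (hA.isUnit hΛ) (hA'.isUnit hΛr)]
  calc _ ≤ Λ⁻¹ * norm2 ((A' - A) *ᵥ (A⁻¹ *ᵥ g - A'⁻¹ *ᵥ g')) := hA.norm2_inv_mulVec_le hΛ _
    _ ≤ Λ⁻¹ * (r * norm2 (A'⁻¹ *ᵥ g' - A⁻¹ *ᵥ g)) := by
      rw [← norm2_sub_comm]
      gcongr
      exact hΔ _
    _ ≤ Λ⁻¹ * (r * ((Λ - r)⁻¹ * (norm2 (g' - g) + r * norm2 (A⁻¹ *ᵥ g)))) := by gcongr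
    _ = _ := by ring

section SparseEigenvalue

variable {p k : ℕ}

theorem Lam_mul_norm2_sq_le (S : Matrix (Fin p) (Fin p) ℝ) {θ : Fin p → ℝ} (hθ : sparse k θ) :
    Lam k S * norm2 θ ^ 2 ≤ θ ⬝ᵥ S *ᵥ θ := by
  rcases eq_or_ne θ 0 with rfl | hθ0
  · simp [norm2_eq_zero.2 rfl]
  have hbdd : BddBelow {r | ∃ ψ : Fin p → ℝ, ψ ≠ 0 ∧ sparse k ψ ∧
      r = ψ ⬝ᵥ S *ᵥ ψ / norm2 ψ ^ 2} := by
    refine ⟨-opNorm S, ?_⟩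
    rintro r ⟨ψ, hψ, -, rfl⟩
    rw [le_div_iff₀ (pow_pos (norm2_pos hψ) 2)]
    linarith [neg_abs_le (ψ ⬝ᵥ S *ᵥ ψ), abs_dotProduct_mulVec_le_opNorm S ψ]
  rw [← le_div_iff₀ (pow_pos (norm2_pos hθ0) 2)]
  exact csInf_le hbdd ⟨θ, hθ0, hθ, rfl⟩

def extendByZero (M : Finset (Fin p)) (θ : {x // x ∈ M} → ℝ) : Fin p → ℝ :=
  fun j => if h : j ∈ M then θ ⟨j, h⟩ else 0

variable {M : Finset (Fin p)}

theorem subv_extendByZero (θ : {x // x ∈ M} → ℝ) : subv (extendByZero M θ) M = θ := by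
  funext i
  simp [subv, extendByZero]

theorem extendByZero_dotProduct (θ : {x // x ∈ M} → ℝ) (w : Fin p → ℝ) :
    extendByZero M θ ⬝ᵥ w = θ ⬝ᵥ subv w M :=
  calc ∑ j, extendByZero M θ j * w j = ∑ j ∈ M, extendByZero M θ j * w j :=
        (Finset.sum_subset M.subset_univ fun j _ hj => by simp [extendByZero, hj]).symm
    _ = ∑ i : {x // x ∈ M}, extendByZero M θ i * w i := (Finset.sum_coe_sort M _).symm
    _ = θ ⬝ᵥ subv w M := by simp [extendByZero, subv, dotProduct]

theorem norm2_extendByZero (θ : {x // x ∈ M} → ℝ) : norm2 (extendByZero M θ) = norm2 θ := by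
  have h := extendByZero_dotProduct θ (extendByZero M θ)
  rw [subv_extendByZero] at h
  simpa only [norm2, dotProduct, sq] using congrArg Real.sqrt h

theorem subv_mulVec_extendByZero (S : Matrix (Fin p) (Fin p) ℝ) (θ : {x // x ∈ M} → ℝ) :
    subv (S *ᵥ extendByZero M θ) M = subm S M *ᵥ θ := by
  funext i
  simp only [subv, mulVec, dotProduct_comm (S i.1), extendByZero_dotProduct]
  exact dotProduct_comm _ _

theorem sparse_extendByZero (hM : M.card ≤ k) (θ : {x // x ∈ M} → ℝ) :
    sparse k (extendByZero M θ) := by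
  have hsupp : {j | extendByZero M θ j ≠ 0} ⊆ ↑M := fun j hj => by
    by_contra hjM
    exact hj (dif_neg hjM)
  exact (Set.ncard_le_ncard hsupp M.finite_toSet).trans ((Set.ncard_coe_finset M).trans_le hM)

theorem isCoerciveWith_Lam_subm (S : Matrix (Fin p) (Fin p) ℝ) (hM : M.card ≤ k) :
    IsCoerciveWith (Lam k S) (subm S M) := fun θ => by
  simpa only [norm2_extendByZero, extendByZero_dotProduct, subv_mulVec_extendByZero] using
    Lam_mul_norm2_sq_le S (sparse_extendByZero hM θ)

end SparseEigenvalue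

theorem subm_sub {p : ℕ} (A B : Matrix (Fin p) (Fin p) ℝ) (M : Finset (Fin p)) :
    subm (A - B) M = subm A M - subm B M := rfl

theorem subv_sub {p : ℕ} (v w : Fin p → ℝ) (M : Finset (Fin p)) :
    subv (v - w) M = subv v M - subv w M := rfl

section Suprema

variable {p k : ℕ} {M : Finset (Fin p)}

theorem opNorm_subm_le_RIP (A : Matrix (Fin p) (Fin p) ℝ) (hM : M ∈ Models p k) :
    opNorm (subm A M) ≤ RIP k A :=
  le_ciSup (f := fun M : Models p k => opNorm (subm A M.1)) (Set.finite_range _).bddAbove ⟨M, hM⟩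

theorem norm2_subv_le_Dnorm (v : Fin p → ℝ) (hM : M ∈ Models p k) :
    norm2 (subv v M) ≤ Dnorm k v :=
  le_ciSup (f := fun M : Models p k => norm2 (subv v M.1)) (Set.finite_range _).bddAbove ⟨M, hM⟩

theorem norm2_betaM_le_S2k (S : Matrix (Fin p) (Fin p) ℝ) (G : Fin p → ℝ)
    (hM : M ∈ Models p k) : norm2 (betaM M S G) ≤ S2k k S G :=
  le_ciSup (f := fun M : Models p k => norm2 (betaM M.1 S G)) (Set.finite_range _).bddAbove
    ⟨M, hM⟩

theorem RIP_nonneg (A : Matrix (Fin p) (Fin p) ℝ) : 0 ≤ RIP k A :=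
  Real.iSup_nonneg fun _ => opNorm_nonneg _

theorem Dnorm_nonneg (v : Fin p → ℝ) : 0 ≤ Dnorm k v :=
  Real.iSup_nonneg fun _ => norm2_nonneg _

theorem S2k_nonneg (S : Matrix (Fin p) (Fin p) ℝ) (G : Fin p → ℝ) : 0 ≤ S2k k S G :=
  Real.iSup_nonneg fun _ => norm2_nonneg _

end Suprema

theorem smul_sum_residual_eq_sub_mulVec {ι κ : Type*} [Fintype ι] [Fintype κ] (c : ℝ)
    (x : κ → ι → ℝ) (y : κ → ℝ) (β : ι → ℝ) :
    c • ∑ i, (y i - x i ⬝ᵥ β) • x i =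
      (fun j => c * ∑ i, x i j * y i) - (Matrix.of fun j l => c * ∑ i, x i j * x i l) *ᵥ β := by
  funext j
  simp only [Pi.smul_apply, Finset.sum_apply, Pi.sub_apply, smul_eq_mul, mulVec, dotProduct,
    of_apply, Finset.mul_sum, Finset.sum_mul, sub_mul, Finset.sum_sub_distrib, mul_sub]
  rw [Finset.sum_comm (γ := ι)]
  congr 1 <;> refine Finset.sum_congr rfl fun _ _ => ?_
  · ring
  · exact Finset.sum_congr rfl fun _ _ => by ring

theorem stmt13_general {n p : ℕ} (k : ℕ)
    (X : Fin n → Fin p → ℝ) (Y : Fin n → ℝ)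
    (hatS : Matrix (Fin p) (Fin p) ℝ)
    (hhatS : hatS = Matrix.of fun j l => (n : ℝ)⁻¹ * ∑ i, X i j * X i l)
    (hatG : Fin p → ℝ)
    (hhatG : hatG = fun j => (n : ℝ)⁻¹ * ∑ i, X i j * Y i)
    (Sn : Matrix (Fin p) (Fin p) ℝ) (Gn : Fin p → ℝ)
    (hLam : 0 < Lam k Sn)
    (hRIP : RIP k (hatS - Sn) < Lam k Sn) :
    (⨆ M : Models p k,
        norm2 (betaM M.1 hatS hatG - betaM M.1 Sn Gn
          - (n : ℝ)⁻¹ • ∑ i, (subm Sn M.1)⁻¹.mulVec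
              ((Y i - subv (X i) M.1 ⬝ᵥ betaM M.1 Sn Gn) • subv (X i) M.1))) ≤
      (RIP k (hatS - Sn) / Lam k Sn) *
        ((Dnorm k (hatG - Gn) + RIP k (hatS - Sn) * S2k k Sn Gn) /
          (Lam k Sn - RIP k (hatS - Sn))) := by
  have hR := RIP_nonneg (k := k) (hatS - Sn)
  have hΛR := sub_pos.2 hRIP
  refine Real.iSup_le (fun ⟨M, hM⟩ => ?_) (mul_nonneg (div_nonneg hR hLam.le)
    (div_nonneg (add_nonneg (Dnorm_nonneg _) (mul_nonneg hR (S2k_nonneg _ _))) hΛR.le))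
  have hresidual : (n : ℝ)⁻¹ • ∑ i, (subm Sn M)⁻¹ *ᵥ
      ((Y i - subv (X i) M ⬝ᵥ betaM M Sn Gn) • subv (X i) M) =
      (subm Sn M)⁻¹ *ᵥ (subv hatG M - subm hatS M *ᵥ betaM M Sn Gn) := by
    rw [← mulVec_sum, ← mulVec_smul, hhatS, hhatG]
    exact congrArg _ (smul_sum_residual_eq_sub_mulVec _ _ _ _)
  have hbound := norm2_inv_mulVec_sub_linearization_le (A' := subm hatS M) (g' := subv hatG M)
    (g := subv Gn M) hLam (isCoerciveWith_Lam_subm Sn hM.2)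
    (subm_sub hatS Sn M ▸ opNorm_subm_le_RIP _ hM) hRIP
  rw [← subv_sub] at hbound
  rw [hresidual]
  calc _ ≤ _ := hbound
    _ ≤ _ := by
      gcongr
      · exact norm2_subv_le_Dnorm _ hM
      · exact norm2_betaM_le_S2k _ _ hM

/-- Uniform-in-model linear representation for least squares: with
`Σ̂_n = (1/n)∑ᵢ XᵢXᵢᵀ`, `Γ̂_n = (1/n)∑ᵢ XᵢYᵢ`, `β̂_{n,M} = (Σ̂_n(M))⁻¹Γ̂_n(M)`,
`β_{n,M} = (Σ_n(M))⁻¹Γ_n(M)`, if `Λ_n(k) > 0` and `RIP_n(k) < Λ_n(k)` then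
`sup_{M∈𝓜(k)} ‖β̂_{n,M} − β_{n,M} − (1/n)∑ᵢ (Σ_n(M))⁻¹Xᵢ(M)(Yᵢ − Xᵢ(M)ᵀβ_{n,M})‖₂
  ≤ (RIP_n(k)/Λ_n(k)) (𝒟_n(k) + RIP_n(k) S_{2,k}(Σ_n,Γ_n)) / (Λ_n(k) − RIP_n(k))`. -/
theorem stmt13 {n p : ℕ} (hn : 0 < n) (k : ℕ) (hk : 1 ≤ k)
    (X : Fin n → Fin p → ℝ) (Y : Fin n → ℝ)
    (hatS : Matrix (Fin p) (Fin p) ℝ)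
    (hhatS : hatS = Matrix.of fun j l => (n : ℝ)⁻¹ * ∑ i, X i j * X i l)
    (hatG : Fin p → ℝ)
    (hhatG : hatG = fun j => (n : ℝ)⁻¹ * ∑ i, X i j * Y i)
    (Sn : Matrix (Fin p) (Fin p) ℝ) (hSn : Sn.IsSymm) (Gn : Fin p → ℝ)
    (hLam : 0 < Lam k Sn)
    (hRIP : RIP k (hatS - Sn) < Lam k Sn) :
    (⨆ M : Models p k,
        norm2 (betaM M.1 hatS hatG - betaM M.1 Sn Gn
          - (n : ℝ)⁻¹ • ∑ i, (subm Sn M.1)⁻¹.mulVec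
              ((Y i - subv (X i) M.1 ⬝ᵥ betaM M.1 Sn Gn) • subv (X i) M.1))) ≤
      (RIP k (hatS - Sn) / Lam k Sn) *
        ((Dnorm k (hatG - Gn) + RIP k (hatS - Sn) * S2k k Sn Gn) /
          (Lam k Sn - RIP k (hatS - Sn))) :=
  stmt13_general k X Y hatS hhatS hatG hhatG Sn Gn hLam hRIP
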